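/- arXiv:2305.13730 — 2 statements merged into one kernel-verified Lean document; each statement's English description precedes it below -/
import Mathlib

section
/- Let n, r ≥ 1 be integers, q an odd prime power, E a nonempty subset of (M_n(𝔽_q))^r, and T ∈ M_n(𝔽_q). Then the incidence function satisfies the exact identity ν(T) = (#σ_T)/q^{rn²} + (q^{2rn²}/(#E)²) · Σ_{𝐌 ∈ (M_n(𝔽_q))^r, 𝐌 ≠ 0} |Ê(𝐌)|² · σ̂_T(𝐌). -/
open scoped BigOperators

/-- The additive character `ψ(X) = exp((2πi/p)·Tr_{F/F_p}(Tr X))` on `n × n` matrices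
over a finite field `F` of characteristic `p`. -/
noncomputable def psi (F : Type) [Field F] [Fintype F] {n : ℕ}
    (X : Matrix (Fin n) (Fin n) F) : ℂ :=
  letI : Algebra (ZMod (ringChar F)) F := ZMod.algebra _ _
  Complex.exp (2 * Real.pi * Complex.I *
    (((Algebra.trace (ZMod (ringChar F)) F X.trace).val : ℂ) / (ringChar F : ℂ)))

/-- The radical `{X : Tr(A(XY+YX)) = 0 for all Y}` of the quadratic form
`X ↦ Tr(AX²)` on `M_n(F)`. -/
def radical (F : Type) [Field F] [Fintype F] {n : ℕ}
    (A : Matrix (Fin n) (Fin n) F) : Submodule F (Matrix (Fin n) (Fin n) F) where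
  carrier := {X : Matrix (Fin n) (Fin n) F |
    ∀ Y : Matrix (Fin n) (Fin n) F, (A * (X * Y + Y * X)).trace = 0}
  zero_mem' := by intro Y; simp
  add_mem' := by
    intro X₁ X₂ h₁ h₂ Y
    have e : A * ((X₁ + X₂) * Y + Y * (X₁ + X₂))
        = A * (X₁ * Y + Y * X₁) + A * (X₂ * Y + Y * X₂) := by noncomm_ring
    show (A * ((X₁ + X₂) * Y + Y * (X₁ + X₂))).trace = 0
    rw [e, Matrix.trace_add, h₁ Y, h₂ Y, add_zero]
  smul_mem' := by
    intro c X h Y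
    have e : A * ((c • X) * Y + Y * (c • X)) = c • (A * (X * Y + Y * X)) := by
      rw [smul_mul_assoc, Matrix.mul_smul, ← smul_add, Matrix.mul_smul]
    show (A * ((c • X) * Y + Y * (c • X))).trace = 0
    rw [e, Matrix.trace_smul, h Y, smul_zero]

/-- The radical invariant `ρ_A`: the `F`-dimension of the radical of `X ↦ Tr(AX²)`. -/
noncomputable def rho (F : Type) [Field F] [Fintype F] {n : ℕ}
    (A : Matrix (Fin n) (Fin n) F) : ℕ :=
  Module.finrank F (radical F A)

/-- The quadratic matrix Gauss sum `G(A,B) = Σ_X ψ(AX² + BX)`. -/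
noncomputable def matGaussSum (F : Type) [Field F] [Fintype F] {n : ℕ}
    (A B : Matrix (Fin n) (Fin n) F) : ℂ :=
  ∑ X : Matrix (Fin n) (Fin n) F, psi F (A * X ^ 2 + B * X)

/-- The matrix sphere `σ_T = {X ∈ M_n(F)^r : X₁² + ⋯ + X_r² = T}`. -/
def matSphere (F : Type) [Field F] [Fintype F] [DecidableEq F] {n : ℕ} (r : ℕ)
    (T : Matrix (Fin n) (Fin n) F) : Finset (Fin r → Matrix (Fin n) (Fin n) F) :=
  Finset.univ.filter (fun X => ∑ i, (X i) ^ 2 = T)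

/-- The Fourier transform `f̂(M) = q^{-rn²} Σ_A f(A) conj(ψ(M·A))` on `M_n(F)^r`. -/
noncomputable def matFourier (F : Type) [Field F] [Fintype F] {n r : ℕ}
    (f : (Fin r → Matrix (Fin n) (Fin n) F) → ℂ)
    (M : Fin r → Matrix (Fin n) (Fin n) F) : ℂ :=
  ((Fintype.card F : ℂ) ^ (r * n ^ 2))⁻¹ *
    ∑ A : Fin r → Matrix (Fin n) (Fin n) F, f A * (starRingEnd ℂ) (psi F (∑ i, M i * A i))

/-!
The incidence count is `∑_{X,Y ∈ E} σ_T(X - Y)`. Expanding `σ_T` by Fourier inversion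
with respect to the characters `A ↦ ψ(M·A)` turns it into `q^{2rn²} ∑_M |Ê(M)|² σ̂_T(M)`;
the term `M = 0` is `(#E)² #σ_T / q^{rn²}`. Inversion holds because the pairing is
nondegenerate: for `A ≠ 0` some `M` has `ψ(M·A) ≠ 1`, which reduces to nondegeneracy of
the trace forms `(B, A) ↦ Tr(BA)` on `M_n(𝔽_q)` and `Tr_{𝔽_q/𝔽_p}` on `𝔽_q`.
-/

open Finset ComplexConjugate

namespace AddChar

variable {G R : Type*} [AddCommGroup G] [Fintype G] [AddCommGroup R]

noncomputable def pairingFourier (ψ : AddChar R ℂ) (β : G →+ G →+ R) (f : G → ℂ) (M : G) : ℂ :=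
  (Fintype.card G : ℂ)⁻¹ * ∑ A, f A * conj (ψ (β M A))

variable {ψ : AddChar R ℂ} {β : G →+ G →+ R}

lemma pairingFourier_zero (f : G → ℂ) :
    pairingFourier ψ β f 0 = (Fintype.card G : ℂ)⁻¹ * ∑ A, f A := by
  simp [pairingFourier]

lemma apply_pairing_sub (M X Y : G) :
    ψ (β M (X - Y)) = ψ (β M X) * conj (ψ (β M Y)) := by
  have hneg := (ψ.compAddMonoidHom (β M)).map_neg_eq_conj Y
  rw [compAddMonoidHom_apply, compAddMonoidHom_apply] at hneg
  rw [← hneg, ← map_add_eq_mul, ← map_add, sub_eq_add_neg]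

variable [DecidableEq G]

lemma sum_apply_pairing_eq_ite (hβ : ∀ A ≠ 0, ∃ M, ψ (β M A) ≠ 1) (A : G) :
    ∑ M, ψ (β M A) = if A = 0 then (Fintype.card G : ℂ) else 0 := by
  split_ifs with hA
  · simp [hA]
  · obtain ⟨M, hM⟩ := hβ A hA
    exact sum_eq_zero_of_ne_one (ψ := ψ.compAddMonoidHom (β.flip A)) (ne_one_iff.2 ⟨M, hM⟩)

lemma sum_pairingFourier_mul (hβ : ∀ A ≠ 0, ∃ M, ψ (β M A) ≠ 1) (h : G → ℂ) (Z : G) :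
    ∑ M, pairingFourier ψ β h M * ψ (β M Z) = h Z := by
  have hG : (Fintype.card G : ℂ) ≠ 0 := Nat.cast_ne_zero.2 Fintype.card_ne_zero
  calc ∑ M, pairingFourier ψ β h M * ψ (β M Z)
      = (Fintype.card G : ℂ)⁻¹ * ∑ A, h A * ∑ M, ψ (β M (Z - A)) := by
        simp_rw [pairingFourier, mul_sum, sum_mul, apply_pairing_sub]
        rw [sum_comm]
        exact sum_congr rfl fun A _ => sum_congr rfl fun M _ => by ring
    _ = h Z := by
        simp_rw [sum_apply_pairing_eq_ite hβ, sub_eq_zero, mul_ite, mul_zero, sum_ite_eq,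
          mem_univ, if_true]
        field_simp

lemma sum_sum_conj_mul_mul_sub (hβ : ∀ A ≠ 0, ∃ M, ψ (β M A) ≠ 1) (f h : G → ℂ) :
    ∑ X, ∑ Y, conj (f X) * f Y * h (X - Y) =
      (Fintype.card G : ℂ) ^ 2 *
        ∑ M, (‖pairingFourier ψ β f M‖ : ℂ) ^ 2 * pairingFourier ψ β h M := by
  have hG : (Fintype.card G : ℂ) ≠ 0 := Nat.cast_ne_zero.2 Fintype.card_ne_zero
  have hf : ∀ M, ∑ Y, f Y * conj (ψ (β M Y)) = Fintype.card G * pairingFourier ψ β f M := by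
    intro M; rw [pairingFourier]; field_simp
  calc ∑ X, ∑ Y, conj (f X) * f Y * h (X - Y)
      = ∑ M, pairingFourier ψ β h M * (conj (∑ X, f X * conj (ψ (β M X))) *
          ∑ Y, f Y * conj (ψ (β M Y))) := by
        simp_rw [← sum_pairingFourier_mul hβ h, apply_pairing_sub, map_sum, map_mul,
          RCLike.conj_conj, sum_mul_sum, mul_sum]
        conv_lhs => enter [2, X]; rw [sum_comm]
        rw [sum_comm]
        exact sum_congr rfl fun M _ => sum_congr rfl fun X _ => sum_congr rfl fun Y _ => by ring
    _ = _ := by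
        simp_rw [hf, map_mul, Complex.conj_natCast, mul_sum]
        refine sum_congr rfl fun M _ => ?_
        rw [← Complex.conj_mul']
        ring

lemma sum_sum_conj_mul_mul_sub_eq_add (hβ : ∀ A ≠ 0, ∃ M, ψ (β M A) ≠ 1) (f h : G → ℂ) :
    ∑ X, ∑ Y, conj (f X) * f Y * h (X - Y) =
      (‖∑ A, f A‖ : ℂ) ^ 2 * (∑ A, h A) / Fintype.card G +
        (Fintype.card G : ℂ) ^ 2 * ∑ M ∈ univ.filter (fun M => M ≠ 0),
          (‖pairingFourier ψ β f M‖ : ℂ) ^ 2 * pairingFourier ψ β h M := by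
  have hG : (Fintype.card G : ℂ) ≠ 0 := Nat.cast_ne_zero.2 Fintype.card_ne_zero
  rw [sum_sum_conj_mul_mul_sub hβ, filter_ne', ← add_sum_erase _ _ (mem_univ 0),
    pairingFourier_zero, pairingFourier_zero, norm_mul, norm_inv, Complex.norm_natCast]
  push_cast
  field_simp

lemma exists_apply_dotProduct_ne_one {ι A M : Type*} [Fintype ι] [DecidableEq ι]
    [NonUnitalNonAssocSemiring A] [Monoid M] {ψ : AddChar A M}
    (hψ : ∀ a ≠ 0, ∃ b, ψ (b * a) ≠ 1) {v : ι → A} (hv : v ≠ 0) : ∃ w, ψ (w ⬝ᵥ v) ≠ 1 := by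
  obtain ⟨i, hi⟩ := Function.ne_iff.1 hv
  obtain ⟨b, hb⟩ := hψ (v i) hi
  exact ⟨Pi.single i b, by rwa [single_dotProduct]⟩

end AddChar

lemma Finset.card_filter_sub_product_eq_sum_sum {G : Type*} [AddGroup G] [Fintype G]
    [DecidableEq G] (E : Finset G) (P : G → Prop) [DecidablePred P] :
    (((E ×ˢ E).filter fun p => P (p.1 - p.2)).card : ℂ) =
      ∑ X, ∑ Y, conj (if X ∈ E then (1 : ℂ) else 0) * (if Y ∈ E then 1 else 0) *
        (if P (X - Y) then 1 else 0) := by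
  rw [card_filter, sum_product]
  push_cast
  simp only [apply_ite (starRingEnd ℂ), map_one, map_zero, ite_mul, one_mul, zero_mul]
  simp [sum_ite_mem]

@[simps]
def Matrix.dotProductAddMonoidHom (ι A : Type*) [Fintype ι] [NonUnitalNonAssocSemiring A] :
    (ι → A) →+ (ι → A) →+ A where
  toFun v := { toFun := dotProduct v, map_zero' := dotProduct_zero v, map_add' := dotProduct_add v }
  map_zero' := by ext; simp
  map_add' _ _ := by ext; simp [add_dotProduct]

lemma card_matrixTuple (α : Type*) [Fintype α] (n r : ℕ) :
    Fintype.card (Fin r → Matrix (Fin n) (Fin n) α) = Fintype.card α ^ (r * n ^ 2) := by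
  rw [Fintype.card_fun, Fintype.card_fin,
    ← Fintype.card_congr (Matrix.of : (Fin n → Fin n → α) ≃ _)]
  simp only [Fintype.card_fun, Fintype.card_fin]
  ring

section MatrixCharacter

variable (F : Type) [Field F] [Fintype F] (n : ℕ)

noncomputable def psiChar : AddChar (Matrix (Fin n) (Fin n) F) ℂ :=
  letI : Algebra (ZMod (ringChar F)) F := ZMod.algebra _ _
  haveI : NeZero (ringChar F) := ⟨(CharP.char_is_prime F _).ne_zero⟩
  ZMod.stdAddChar.compAddMonoidHom
    ((Algebra.trace (ZMod (ringChar F)) F).toAddMonoidHom.comp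
      (Matrix.traceLinearMap (Fin n) F F).toAddMonoidHom)

variable {F n}

lemma psiChar_apply (X : Matrix (Fin n) (Fin n) F) : psiChar F n X = psi F X := by
  simp only [psi, psiChar, AddChar.compAddMonoidHom_apply, AddMonoidHom.coe_comp,
    LinearMap.toAddMonoidHom_coe, Function.comp_apply, Matrix.traceLinearMap_apply,
    ZMod.stdAddChar_apply, ZMod.toCircle_apply, mul_div_assoc]

lemma exists_psiChar_mul_ne_one {A : Matrix (Fin n) (Fin n) F} (hA : A ≠ 0) :
    ∃ B, psiChar F n (B * A) ≠ 1 := by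
  let : Algebra (ZMod (ringChar F)) F := ZMod.algebra _ _
  have : NeZero (ringChar F) := ⟨(CharP.char_is_prime F _).ne_zero⟩
  obtain ⟨X, hX⟩ : ∃ X, (X * A).trace ≠ 0 := by
    simpa using mt (Matrix.ext_iff_trace_mul_left (B := 0)).2 hA
  obtain ⟨b, hb⟩ := FiniteField.trace_to_zmod_nondegenerate F hX
  refine ⟨b • X, fun h => hb (ZMod.injective_stdAddChar ?_)⟩
  rw [AddChar.map_zero_eq_one, ← h]
  simp [psiChar, mul_comm]

lemma matFourier_eq_pairingFourier {r : ℕ} (f : (Fin r → Matrix (Fin n) (Fin n) F) → ℂ) :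
    matFourier F f =
      AddChar.pairingFourier (psiChar F n) (Matrix.dotProductAddMonoidHom _ _) f := by
  ext M
  simp only [matFourier, AddChar.pairingFourier, card_matrixTuple F, psiChar_apply]
  simp [dotProduct]

end MatrixCharacter

theorem incidence_identity_general (n r : ℕ)
    (F : Type) [Field F] [Fintype F] [DecidableEq F]
    (E : Finset (Fin r → Matrix (Fin n) (Fin n) F)) (hE : E.Nonempty)
    (T : Matrix (Fin n) (Fin n) F) :
    (((E ×ˢ E).filter
        (fun p : (Fin r → Matrix (Fin n) (Fin n) F) × (Fin r → Matrix (Fin n) (Fin n) F) =>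
          ∑ i, (p.1 i - p.2 i) ^ 2 = T)).card : ℂ) / (E.card : ℂ) ^ 2 =
      ((matSphere F r T).card : ℂ) / (Fintype.card F : ℂ) ^ (r * n ^ 2) +
        ((Fintype.card F : ℂ) ^ (2 * r * n ^ 2) / (E.card : ℂ) ^ 2) *
          ∑ M ∈ Finset.univ.filter (fun M : Fin r → Matrix (Fin n) (Fin n) F => M ≠ 0),
            ((‖matFourier F (fun A => if A ∈ E then (1 : ℂ) else 0) M‖ : ℂ) ^ 2 *
              matFourier F (fun X => if (∑ i, (X i) ^ 2) = T then (1 : ℂ) else 0) M) := by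
  have hE0 : (E.card : ℂ) ≠ 0 := Nat.cast_ne_zero.2 hE.card_pos.ne'
  have hβ : ∀ A ≠ 0, ∃ M, psiChar F n (Matrix.dotProductAddMonoidHom (Fin r) _ M A) ≠ 1 :=
    fun _ => AddChar.exists_apply_dotProduct_ne_one fun _ => exists_psiChar_mul_ne_one
  have hcount : (((E ×ˢ E).filter
      (fun p : (Fin r → Matrix (Fin n) (Fin n) F) × (Fin r → Matrix (Fin n) (Fin n) F) =>
        ∑ i, (p.1 i - p.2 i) ^ 2 = T)).card : ℂ) =
      ∑ X, ∑ Y, conj (if X ∈ E then (1 : ℂ) else 0) * (if Y ∈ E then 1 else 0) *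
        (if ∑ i, (X - Y) i ^ 2 = T then 1 else 0) :=
    E.card_filter_sub_product_eq_sum_sum fun X => ∑ i, X i ^ 2 = T
  have hsumE : ∑ A, (if A ∈ E then (1 : ℂ) else 0) = E.card := by simp
  have hsumS : ∑ X : Fin r → Matrix (Fin n) (Fin n) F,
      (if ∑ i, X i ^ 2 = T then (1 : ℂ) else 0) = (matSphere F r T).card := by
    simp [matSphere]
  have hfourier := AddChar.sum_sum_conj_mul_mul_sub_eq_add hβ
    (fun A => if A ∈ E then (1 : ℂ) else 0) (fun X => if ∑ i, X i ^ 2 = T then (1 : ℂ) else 0)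
  rw [hcount, hfourier, hsumE, hsumS,
    matFourier_eq_pairingFourier, matFourier_eq_pairingFourier, card_matrixTuple F,
    Complex.norm_natCast]
  push_cast
  field_simp
  ring

/-- Equation (3.3): the exact incidence identity
`ν(T) = #σ_T / q^{rn²} + (q^{2rn²}/(#E)²) Σ_{M ≠ 0} |Ê(M)|² σ̂_T(M)`. -/
theorem incidence_identity (n r : ℕ) (hn : 1 ≤ n) (hr : 1 ≤ r)
    (F : Type) [Field F] [Fintype F] [DecidableEq F]
    (hq : Odd (Fintype.card F))
    (E : Finset (Fin r → Matrix (Fin n) (Fin n) F)) (hE : E.Nonempty)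
    (T : Matrix (Fin n) (Fin n) F) :
    (((E ×ˢ E).filter
        (fun p : (Fin r → Matrix (Fin n) (Fin n) F) × (Fin r → Matrix (Fin n) (Fin n) F) =>
          ∑ i, (p.1 i - p.2 i) ^ 2 = T)).card : ℂ) / (E.card : ℂ) ^ 2 =
      ((matSphere F r T).card : ℂ) / (Fintype.card F : ℂ) ^ (r * n ^ 2) +
        ((Fintype.card F : ℂ) ^ (2 * r * n ^ 2) / (E.card : ℂ) ^ 2) *
          ∑ M ∈ Finset.univ.filter (fun M : Fin r → Matrix (Fin n) (Fin n) F => M ≠ 0),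
            ((‖matFourier F (fun A => if A ∈ E then (1 : ℂ) else 0) M‖ : ℂ) ^ 2 *
              matFourier F (fun X => if (∑ i, (X i) ^ 2) = T then (1 : ℂ) else 0) M) :=
  incidence_identity_general n r F E hE T
end

section
/- Let r ≥ 4 be an integer. There exists a constant c > 0 such that for every odd prime power q, every T ∈ M_2(𝔽_q), and every 𝐌 ∈ (M_2(𝔽_q))^r with 𝐌 ≠ 0, the Fourier transform of the matrix sphere satisfies |σ̂_T(𝐌)| ≤ c·q^{−r−1}. -/
open scoped BigOperators

/-!
Write the indicator of `‖X‖ = T` as `q⁻⁴ Σ_C ψ(C(‖X‖ - T))` with `C ∈ M₂(𝔽_q)`; the sum over `X`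
then factorises, so that `q^{4(r+1)} σ̂_T(M) = Σ_C ψ(-CT) Π_i G(C, -M_i)` with the matrix Gauss
sums `G`. The term `C = 0` vanishes because some `M_i ≠ 0`. Squaring a Gauss sum and shifting the
variable gives `|G(C, B)| ≤ q^{(4 + ρ_C)/2}`. For `q` odd and `C ≠ 0`, `ρ_C ≤ 1` when `tr C ≠ 0`
(the trace is injective on the radical) and `ρ_C ≤ 2` otherwise (the radical is then a proper
subspace of the hyperplane `tr(CX) = 0`, missing `X = 1`). As there are `q³` matrices of trace zero,
`|σ̂_T(M)| ≤ q^{-4r-4} (q^{3+3r} + q^{4+5r/2}) ≤ 2 q^{-r-1}` as soon as `r ≥ 2`.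
-/

lemma Matrix.card_fin_fin (α : Type*) [Fintype α] (n : ℕ) :
    Fintype.card (Matrix (Fin n) (Fin n) α) = Fintype.card α ^ n ^ 2 := by
  classical
  show Fintype.card (Fin n → Fin n → α) = _
  rw [Fintype.card_fun, Fintype.card_fun, Fintype.card_fin, ← pow_mul, sq]

lemma Matrix.traceLinearMap_comp_mulLeft_ne_zero {R : Type*} [CommSemiring R] {n : ℕ}
    {A : Matrix (Fin n) (Fin n) R} (hA : A ≠ 0) :
    Matrix.traceLinearMap (Fin n) R R ∘ₗ LinearMap.mulLeft R A ≠ 0 := by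
  intro h
  refine hA ((Matrix.ext_iff_trace_mul_right (B := 0)).mpr fun Y => ?_)
  simpa using LinearMap.congr_fun h Y

lemma Matrix.finrank_ker_traceLinearMap_comp_mulLeft {K : Type*} [Field K] {n : ℕ}
    {A : Matrix (Fin n) (Fin n) K} (hA : A ≠ 0) :
    Module.finrank K (LinearMap.ker (Matrix.traceLinearMap (Fin n) K K ∘ₗ LinearMap.mulLeft K A))
      + 1 = n ^ 2 := by
  rw [Module.Dual.finrank_ker_add_one_of_ne_zero (traceLinearMap_comp_mulLeft_ne_zero hA),
    Module.finrank_matrix, Module.finrank_self, Fintype.card_fin, mul_one, sq]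

/-- Polarisation of the Cayley–Hamilton identity `X² = tr X • X - det X • 1`. -/
lemma Matrix.mul_add_mul_fin_two {R : Type*} [CommRing R] (A X : Matrix (Fin 2) (Fin 2) R) :
    X * A + A * X
      = X.trace • A + A.trace • X + ((A * X).trace - X.trace * A.trace) • (1 : Matrix _ _ R) := by
  ext i j
  fin_cases i <;> fin_cases j <;>
    simp [Matrix.trace_fin_two, Matrix.mul_apply, Fin.sum_univ_two] <;> ring

variable {F : Type} [Field F] [Fintype F] {n : ℕ}

instance : Fact (ringChar F).Prime := ⟨CharP.char_is_prime F _⟩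

noncomputable def traceChar (F : Type) [Field F] [Fintype F] : AddChar F ℂ :=
  letI : Algebra (ZMod (ringChar F)) F := ZMod.algebra _ _
  ZMod.stdAddChar.compAddMonoidHom (Algebra.trace (ZMod (ringChar F)) F).toAddMonoidHom

lemma psi_eq_traceChar_trace (X : Matrix (Fin n) (Fin n) F) :
    psi F X = traceChar F X.trace := by
  rw [psi, traceChar, AddChar.compAddMonoidHom_apply, ZMod.stdAddChar_apply, ZMod.toCircle_apply]
  simp only [LinearMap.toAddMonoidHom_coe]
  norm_num
  ring_nf

lemma traceChar_ne_zero : traceChar F ≠ 0 := by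
  let _ : Algebra (ZMod (ringChar F)) F := ZMod.algebra _ _
  obtain ⟨x, hx⟩ := Algebra.trace_surjective (ZMod (ringChar F)) F 1
  refine AddChar.ne_zero_iff.mpr
    ⟨x, fun h => one_ne_zero (ZMod.injective_stdAddChar (N := ringChar F) ?_)⟩
  rw [AddChar.map_zero_eq_one, ← h]
  simp [traceChar, hx]

lemma sum_traceChar_linearMap {V : Type*} [AddCommGroup V] [Module F V] [Fintype V]
    (L : V →ₗ[F] F) [Decidable (L = 0)] :
    ∑ v, traceChar F (L v) = if L = 0 then (Fintype.card V : ℂ) else 0 := by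
  classical
  have hsum := AddChar.sum_eq_ite ((traceChar F).compAddMonoidHom L.toAddMonoidHom)
  have htrivial : (traceChar F).compAddMonoidHom L.toAddMonoidHom = 0 ↔ L = 0 := by
    refine ⟨fun hL => by_contra fun hL0 => traceChar_ne_zero (F := F) ?_, fun hL => ?_⟩
    · ext x
      obtain ⟨v, rfl⟩ := L.surjective hL0 x
      exact DFunLike.congr_fun hL v
    · ext v
      simp [hL]
  simp only [AddChar.compAddMonoidHom_apply, LinearMap.toAddMonoidHom_coe] at hsum
  rw [hsum]
  exact if_congr htrivial rfl rfl

lemma psi_add (X Y : Matrix (Fin n) (Fin n) F) : psi F (X + Y) = psi F X * psi F Y := by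
  simp only [psi_eq_traceChar_trace, Matrix.trace_add, AddChar.map_add_eq_mul]

lemma psi_sum {ι : Type*} (s : Finset ι) (X : ι → Matrix (Fin n) (Fin n) F) :
    psi F (∑ i ∈ s, X i) = ∏ i ∈ s, psi F (X i) := by
  induction s using Finset.cons_induction with
  | empty => simp [psi_eq_traceChar_trace]
  | cons a s ha ih => rw [Finset.sum_cons, Finset.prod_cons, psi_add, ih]

lemma norm_psi (X : Matrix (Fin n) (Fin n) F) : ‖psi F X‖ = 1 := by
  rw [psi_eq_traceChar_trace, AddChar.norm_apply]

lemma conj_psi (X : Matrix (Fin n) (Fin n) F) : starRingEnd ℂ (psi F X) = psi F (-X) := by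
  rw [psi_eq_traceChar_trace, psi_eq_traceChar_trace, Matrix.trace_neg,
    AddChar.map_neg_eq_conj]

lemma sum_psi_linearMap [DecidableEq F]
    (L : Matrix (Fin n) (Fin n) F →ₗ[F] Matrix (Fin n) (Fin n) F) :
    ∑ Y, psi F (L Y) = if ∀ Y, (L Y).trace = 0 then (Fintype.card F : ℂ) ^ n ^ 2 else 0 := by
  have hsum := sum_traceChar_linearMap (Matrix.traceLinearMap (Fin n) F F ∘ₗ L)
  simp only [LinearMap.comp_apply, Matrix.traceLinearMap_apply] at hsum
  simp only [psi_eq_traceChar_trace, hsum]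
  refine if_congr ?_ ?_ rfl
  · simp [LinearMap.ext_iff]
  · rw [Matrix.card_fin_fin, Nat.cast_pow]

lemma sum_psi_mul_left [DecidableEq F] (D : Matrix (Fin n) (Fin n) F) :
    ∑ Y, psi F (D * Y) = if D = 0 then (Fintype.card F : ℂ) ^ n ^ 2 else 0 := by
  refine (sum_psi_linearMap (LinearMap.mulLeft F D)).trans (if_congr ?_ rfl rfl)
  simpa using (Matrix.ext_iff_trace_mul_right (A := D) (B := 0)).symm

lemma sum_psi_mul_right [DecidableEq F] (D : Matrix (Fin n) (Fin n) F) :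
    ∑ Y, psi F (Y * D) = if D = 0 then (Fintype.card F : ℂ) ^ n ^ 2 else 0 := by
  rw [← sum_psi_mul_left D]
  refine Finset.sum_congr rfl fun Y _ => ?_
  rw [psi_eq_traceChar_trace, psi_eq_traceChar_trace, Matrix.trace_mul_comm]

instance [DecidableEq F] (A : Matrix (Fin n) (Fin n) F) : DecidablePred (· ∈ radical F A) :=
  fun Z => decidable_of_iff (∀ Y, (A * (Z * Y + Y * Z)).trace = 0) Iff.rfl

lemma sum_psi_radical [DecidableEq F] (A Z : Matrix (Fin n) (Fin n) F) :
    ∑ Y, psi F (A * (Z * Y + Y * Z))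
      = if Z ∈ radical F A then (Fintype.card F : ℂ) ^ n ^ 2 else 0 :=
  (sum_psi_linearMap (LinearMap.mulLeft F A ∘ₗ
    (LinearMap.mulLeft F Z + LinearMap.mulRight F Z))).trans (if_congr Iff.rfl rfl rfl)

lemma matGaussSum_mul_conj [DecidableEq F] (A B : Matrix (Fin n) (Fin n) F) :
    matGaussSum F A B * starRingEnd ℂ (matGaussSum F A B)
      = (Fintype.card F : ℂ) ^ n ^ 2 *
          ∑ Z ∈ Finset.univ.filter (· ∈ radical F A), psi F (A * Z ^ 2 + B * Z) := by
  -- After substituting `X = Y + Z`, `Y` only survives in `ψ(A(ZY + YZ))`, which is linear in `Y`.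
  have hshift : ∀ Y Z : Matrix (Fin n) (Fin n) F,
      psi F (A * (Y + Z) ^ 2 + B * (Y + Z)) * psi F (-(A * Y ^ 2 + B * Y))
        = psi F (A * (Z * Y + Y * Z)) * psi F (A * Z ^ 2 + B * Z) := by
    intro Y Z
    rw [← psi_add, ← psi_add]
    congr 1
    noncomm_ring
  calc matGaussSum F A B * starRingEnd ℂ (matGaussSum F A B)
      = ∑ Y, ∑ Z, psi F (A * (Y + Z) ^ 2 + B * (Y + Z)) * psi F (-(A * Y ^ 2 + B * Y)) := by
        rw [matGaussSum, map_sum, Finset.sum_mul_sum, Finset.sum_comm]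
        refine Finset.sum_congr rfl fun Y _ => ?_
        rw [conj_psi]
        exact (Fintype.sum_equiv (Equiv.addLeft Y) _ _ fun Z => rfl).symm
    _ = ∑ Z, (∑ Y, psi F (A * (Z * Y + Y * Z))) * psi F (A * Z ^ 2 + B * Z) := by
        simp only [hshift, Finset.sum_mul]
        rw [Finset.sum_comm]
    _ = _ := by
        simp only [sum_psi_radical, ite_mul, zero_mul, Finset.mul_sum, Finset.sum_filter,
          mul_ite, mul_zero]

lemma norm_matGaussSum_sq_le [DecidableEq F] (A B : Matrix (Fin n) (Fin n) F) :
    ‖matGaussSum F A B‖ ^ 2 ≤ (Fintype.card F : ℝ) ^ (n ^ 2 + rho F A) := by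
  have hcard : (Finset.univ.filter (· ∈ radical F A)).card = Fintype.card F ^ rho F A := by
    rw [rho, ← Module.card_eq_pow_finrank (K := F) (V := radical F A), ← Fintype.card_subtype]
  calc ‖matGaussSum F A B‖ ^ 2
      = ‖matGaussSum F A B * starRingEnd ℂ (matGaussSum F A B)‖ := by
        rw [norm_mul, Complex.norm_conj, sq]
    _ ≤ (Fintype.card F : ℝ) ^ n ^ 2 * (Finset.univ.filter (· ∈ radical F A)).card := by
        rw [matGaussSum_mul_conj, norm_mul, norm_pow, Complex.norm_natCast]
        gcongr
        refine (norm_sum_le _ _).trans_eq ?_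
        simp [norm_psi]
    _ = _ := by rw [hcard, pow_add, Nat.cast_pow]

lemma norm_matGaussSum_le [DecidableEq F] (A B : Matrix (Fin n) (Fin n) F) :
    ‖matGaussSum F A B‖ ≤ √(Fintype.card F : ℝ) ^ (n ^ 2 + rho F A) := by
  rw [← pow_le_pow_iff_left₀ (norm_nonneg _) (by positivity) two_ne_zero, ← pow_mul,
    mul_comm, pow_mul, Real.sq_sqrt (Nat.cast_nonneg _)]
  exact norm_matGaussSum_sq_le A B

lemma matGaussSum_zero_left [DecidableEq F] {B : Matrix (Fin n) (Fin n) F} (hB : B ≠ 0) :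
    matGaussSum F 0 B = 0 := by
  simp only [matGaussSum, Matrix.zero_mul, zero_add, sum_psi_mul_left, if_neg hB]

lemma mem_radical_iff (A X : Matrix (Fin n) (Fin n) F) :
    X ∈ radical F A ↔ X * A + A * X = 0 := by
  have htrace : ∀ Y, (A * (X * Y + Y * X)).trace = ((X * A + A * X) * Y).trace := fun Y => by
    rw [Matrix.mul_add, Matrix.add_mul, Matrix.trace_add, Matrix.trace_add, add_comm,
      ← Matrix.mul_assoc, Matrix.trace_mul_cycle, ← Matrix.mul_assoc]
  rw [Matrix.ext_iff_trace_mul_right (B := 0)]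
  simp only [Matrix.zero_mul, Matrix.trace_zero, ← htrace]
  rfl

lemma trace_mul_eq_zero_of_mem_radical (h2 : (2 : F) ≠ 0) {A X : Matrix (Fin n) (Fin n) F}
    (hX : X ∈ radical F A) : (A * X).trace = 0 := by
  have h := hX 1
  rw [Matrix.mul_one, Matrix.one_mul, ← two_smul F X, Matrix.mul_smul, Matrix.trace_smul,
    smul_eq_mul] at h
  exact (mul_eq_zero.mp h).resolve_left h2

lemma rho_le_one_of_trace_ne_zero (h2 : (2 : F) ≠ 0) {A : Matrix (Fin 2) (Fin 2) F}
    (hA : A.trace ≠ 0) : rho F A ≤ 1 := by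
  have hinj : Function.Injective
      (Matrix.traceLinearMap (Fin 2) F F ∘ₗ (radical F A).subtype) := by
    rw [← LinearMap.ker_eq_bot, LinearMap.ker_eq_bot']
    rintro ⟨X, hX⟩ htr
    replace htr : X.trace = 0 := htr
    have hpolar := Matrix.mul_add_mul_fin_two A X
    rw [(mem_radical_iff A X).mp hX, htr, trace_mul_eq_zero_of_mem_radical h2 hX] at hpolar
    simp only [zero_smul, zero_add, zero_mul, sub_zero, add_zero] at hpolar
    exact Subtype.ext ((smul_eq_zero.mp hpolar.symm).resolve_left hA)
  simpa [rho] using LinearMap.finrank_le_finrank_of_injective hinj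

lemma rho_le_two_of_trace_eq_zero (h2 : (2 : F) ≠ 0) {A : Matrix (Fin 2) (Fin 2) F}
    (hA : A ≠ 0) (htr : A.trace = 0) : rho F A ≤ 2 := by
  set H := LinearMap.ker (Matrix.traceLinearMap (Fin 2) F F ∘ₗ LinearMap.mulLeft F A)
  have hle : radical F A ≤ H := fun X hX => trace_mul_eq_zero_of_mem_radical h2 hX
  have hone : (1 : Matrix (Fin 2) (Fin 2) F) ∈ H := by simpa [H] using htr
  have hone' : (1 : Matrix (Fin 2) (Fin 2) F) ∉ radical F A := by
    rw [mem_radical_iff, Matrix.mul_one, Matrix.one_mul, ← two_smul F A]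
    exact smul_ne_zero h2 hA
  have hlt := Submodule.finrank_lt_finrank_of_lt (lt_of_le_of_ne hle fun h => hone' (h ▸ hone))
  have hH : Module.finrank F H + 1 = 2 ^ 2 := Matrix.finrank_ker_traceLinearMap_comp_mulLeft hA
  rw [rho]
  omega

lemma card_filter_trace_eq_zero [DecidableEq F] [NeZero n] :
    (Finset.univ.filter fun C : Matrix (Fin n) (Fin n) F => C.trace = 0).card
      = Fintype.card F ^ (n ^ 2 - 1) := by
  have hH := Matrix.finrank_ker_traceLinearMap_comp_mulLeft (K := F) (n := n) one_ne_zero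
  rw [← Nat.eq_sub_of_add_eq hH, ← Nat.card_eq_fintype_card, ← Module.natCard_eq_pow_finrank,
    ← Fintype.card_subtype, ← Nat.card_eq_fintype_card]
  exact Nat.card_congr (Equiv.subtypeEquivRight fun C => by simp)

lemma sum_sphere_mul_conj_psi [DecidableEq F] {r : ℕ} (T : Matrix (Fin n) (Fin n) F)
    (M : Fin r → Matrix (Fin n) (Fin n) F) :
    (Fintype.card F : ℂ) ^ n ^ 2 * ∑ A : Fin r → Matrix (Fin n) (Fin n) F,
        (if ∑ i, A i ^ 2 = T then 1 else 0) * starRingEnd ℂ (psi F (∑ i, M i * A i))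
      = ∑ C, psi F (-(C * T)) * ∏ i, matGaussSum F C (-M i) := by
  have hsplit : ∀ (A : Fin r → Matrix (Fin n) (Fin n) F) (C : Matrix (Fin n) (Fin n) F),
      psi F (C * (∑ i, A i ^ 2 - T)) * psi F (-∑ i, M i * A i)
        = psi F (-(C * T)) * ∏ i, psi F (C * A i ^ 2 + -M i * A i) := by
    intro A C
    rw [← psi_add, ← psi_sum, ← psi_add]
    congr 1
    simp only [Matrix.mul_sub, Matrix.mul_sum, Finset.sum_add_distrib, neg_mul,
      Finset.sum_neg_distrib]
    abel
  calc (Fintype.card F : ℂ) ^ n ^ 2 * ∑ A : Fin r → Matrix (Fin n) (Fin n) F,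
        (if ∑ i, A i ^ 2 = T then 1 else 0) * starRingEnd ℂ (psi F (∑ i, M i * A i))
      = ∑ A : Fin r → Matrix (Fin n) (Fin n) F, ∑ C,
          psi F (C * (∑ i, A i ^ 2 - T)) * psi F (-∑ i, M i * A i) := by
        rw [Finset.mul_sum]
        refine Finset.sum_congr rfl fun A _ => ?_
        rw [← Finset.sum_mul, sum_psi_mul_right, conj_psi, ← mul_assoc]
        simp only [sub_eq_zero, mul_ite, mul_one, mul_zero]
    _ = ∑ C, psi F (-(C * T)) * ∑ A : Fin r → Matrix (Fin n) (Fin n) F,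
          ∏ i, psi F (C * A i ^ 2 + -M i * A i) := by
        simp only [hsplit, Finset.mul_sum]
        exact Finset.sum_comm
    _ = _ := by
        simp only [matGaussSum, Fintype.prod_sum]

lemma matFourier_sphere_eq [DecidableEq F] {r : ℕ} (T : Matrix (Fin n) (Fin n) F)
    (M : Fin r → Matrix (Fin n) (Fin n) F) :
    matFourier F (fun X => if ∑ i, X i ^ 2 = T then 1 else 0) M
      = ((Fintype.card F : ℂ) ^ (r * n ^ 2) * (Fintype.card F : ℂ) ^ n ^ 2)⁻¹ *
          ∑ C, psi F (-(C * T)) * ∏ i, matGaussSum F C (-M i) := by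
  have hq : (Fintype.card F : ℂ) ^ n ^ 2 ≠ 0 :=
    pow_ne_zero _ (Nat.cast_ne_zero.mpr Fintype.card_ne_zero)
  rw [matFourier, ← sum_sphere_mul_conj_psi, mul_inv, mul_assoc, inv_mul_cancel_left₀ hq]

lemma norm_psi_mul_prod_matGaussSum_le [DecidableEq F] (h2 : (2 : F) ≠ 0) {r : ℕ}
    {C : Matrix (Fin 2) (Fin 2) F} (hC : C ≠ 0) (T : Matrix (Fin 2) (Fin 2) F)
    (M : Fin r → Matrix (Fin 2) (Fin 2) F) :
    ‖psi F (-(C * T)) * ∏ i, matGaussSum F C (-M i)‖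
      ≤ if C.trace = 0 then √(Fintype.card F : ℝ) ^ (6 * r)
        else √(Fintype.card F : ℝ) ^ (5 * r) := by
  have hs : 1 ≤ √(Fintype.card F : ℝ) :=
    Real.one_le_sqrt.mpr (Nat.one_le_cast.mpr Fintype.card_pos)
  calc ‖psi F (-(C * T)) * ∏ i, matGaussSum F C (-M i)‖
      ≤ ∏ _i : Fin r, √(Fintype.card F : ℝ) ^ (2 ^ 2 + rho F C) := by
        rw [norm_mul, norm_psi, one_mul, norm_prod]
        exact Finset.prod_le_prod (fun _ _ => norm_nonneg _)
          fun i _ => norm_matGaussSum_le C (-M i)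
    _ = √(Fintype.card F : ℝ) ^ ((4 + rho F C) * r) := by
        rw [Finset.prod_const, Finset.card_univ, Fintype.card_fin, ← pow_mul]
        norm_num
    _ ≤ _ := by
        split_ifs with htr
        · have := rho_le_two_of_trace_eq_zero h2 hC htr
          exact pow_le_pow_right₀ hs (Nat.mul_le_mul_right r (by omega))
        · have := rho_le_one_of_trace_ne_zero h2 htr
          exact pow_le_pow_right₀ hs (Nat.mul_le_mul_right r (by omega))

lemma norm_sum_psi_mul_prod_matGaussSum_le [DecidableEq F] (h2 : (2 : F) ≠ 0) {r : ℕ}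
    (T : Matrix (Fin 2) (Fin 2) F) {M : Fin r → Matrix (Fin 2) (Fin 2) F} (hM : M ≠ 0) :
    ‖∑ C, psi F (-(C * T)) * ∏ i, matGaussSum F C (-M i)‖
      ≤ √(Fintype.card F : ℝ) ^ (6 * r + 6) + √(Fintype.card F : ℝ) ^ (5 * r + 8) := by
  set s := √(Fintype.card F : ℝ)
  have hs6 : (Fintype.card F : ℝ) ^ 3 = s ^ 6 := by
    rw [show 6 = 2 * 3 by rfl, pow_mul, Real.sq_sqrt (Nat.cast_nonneg _)]
  have hs8 : (Fintype.card F : ℝ) ^ 4 = s ^ 8 := by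
    rw [show 8 = 2 * 4 by rfl, pow_mul, Real.sq_sqrt (Nat.cast_nonneg _)]
  obtain ⟨j, hj⟩ := Function.ne_iff.mp hM
  have hterm : ∀ C, ‖psi F (-(C * T)) * ∏ i, matGaussSum F C (-M i)‖
      ≤ if C.trace = 0 then s ^ (6 * r) else s ^ (5 * r) := by
    intro C
    rcases eq_or_ne C 0 with rfl | hC
    · rw [Finset.prod_eq_zero (Finset.mem_univ j) (matGaussSum_zero_left (neg_ne_zero.mpr hj)),
        mul_zero, norm_zero]
      split_ifs <;> positivity
    · exact norm_psi_mul_prod_matGaussSum_le h2 hC T M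
  have hcard : (Finset.univ.filter fun C : Matrix (Fin 2) (Fin 2) F => ¬C.trace = 0).card
      ≤ Fintype.card F ^ 4 :=
    (Finset.card_filter_le _ _).trans_eq (by simp [Matrix.card_fin_fin])
  calc ‖∑ C, psi F (-(C * T)) * ∏ i, matGaussSum F C (-M i)‖
      ≤ ∑ C : Matrix (Fin 2) (Fin 2) F, if C.trace = 0 then s ^ (6 * r) else s ^ (5 * r) :=
        (norm_sum_le _ _).trans (Finset.sum_le_sum fun C _ => hterm C)
    _ = (Finset.univ.filter fun C : Matrix (Fin 2) (Fin 2) F => C.trace = 0).card * s ^ (6 * r)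
          + (Finset.univ.filter fun C : Matrix (Fin 2) (Fin 2) F => ¬C.trace = 0).card
            * s ^ (5 * r) := by
        rw [Finset.sum_ite, Finset.sum_const, Finset.sum_const, nsmul_eq_mul, nsmul_eq_mul]
    _ ≤ s ^ 6 * s ^ (6 * r) + s ^ 8 * s ^ (5 * r) := by
        rw [card_filter_trace_eq_zero, ← hs6, ← hs8]
        gcongr
        · norm_num
        · exact_mod_cast hcard
    _ = s ^ (6 * r + 6) + s ^ (5 * r + 8) := by ring

/-- Proposition 4.1, Fourier part: for `r ≥ 4` and `M ≠ 0`,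
`|σ̂_T(M)| ≤ c q^{-r-1}` uniformly over odd `q` and `T ∈ M_2(F_q)`. -/
theorem matSphere_fourier_rank_two (r : ℕ) (hr : 4 ≤ r) :
    ∃ c : ℝ, 0 < c ∧
      ∀ (F : Type) [Field F] [Fintype F] [DecidableEq F],
        Odd (Fintype.card F) →
        ∀ T : Matrix (Fin 2) (Fin 2) F,
          ∀ M : Fin r → Matrix (Fin 2) (Fin 2) F, M ≠ 0 →
            ‖
                (matFourier F (fun X => if (∑ i, (X i) ^ 2) = T then (1 : ℂ) else 0) M)‖ ≤
              c * ((Fintype.card F : ℝ) ^ (r + 1))⁻¹ := by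
  refine ⟨2, two_pos, fun F _ _ _ hodd T M hM => ?_⟩
  have h2 : (2 : F) ≠ 0 := Ring.two_ne_zero fun h => by
    rw [Nat.odd_iff, ← Nat.mod_two_ne_zero] at hodd
    exact hodd (FiniteField.even_card_iff_char_two.mp h)
  set s := √(Fintype.card F : ℝ)
  have hs : 1 ≤ s := Real.one_le_sqrt.mpr (Nat.one_le_cast.mpr Fintype.card_pos)
  have hq : (Fintype.card F : ℝ) = s ^ 2 := (Real.sq_sqrt (Nat.cast_nonneg _)).symm
  rw [matFourier_sphere_eq, norm_mul, norm_inv, norm_mul, norm_pow, norm_pow,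
    Complex.norm_natCast, hq, ← pow_mul, ← pow_mul, ← pow_add,
    show 2 * (r * 2 ^ 2) + 2 * 2 ^ 2 = 8 * r + 8 by ring]
  calc _ ≤ (s ^ (8 * r + 8))⁻¹ * (s ^ (6 * r + 6) + s ^ (5 * r + 8)) := by
        gcongr
        exact norm_sum_psi_mul_prod_matGaussSum_le h2 T hM
    _ ≤ (s ^ (8 * r + 8))⁻¹ * (2 * s ^ (6 * r + 6)) := by
        have : s ^ (5 * r + 8) ≤ s ^ (6 * r + 6) := pow_le_pow_right₀ hs (by omega)
        gcongr
        linarith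
    _ = 2 * ((s ^ 2) ^ (r + 1))⁻¹ := by
        field_simp
        ring
end
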